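/- (Necessary condition for perfect compression) Let F be a finite field and let S be a source with deviation symmetry in (F^n)^s with representative set D and vectorized representative set D̃ ⊆ F^{sn}. Suppose matrices H_1, …, H_s (H_i of size m_i × n) form a perfect lossless linear compression of S, i.e. the joint map is injective on S and |F|^M = |S| where M = m_1 + ⋯ + m_s. Then M ≥ n and there exists an (M − n) × sn matrix P = [Q_1 | ⋯ | Q_s] over F with Q_1 + ⋯ + Q_s = 0 whose restriction to D̃ is a bijection from D̃ onto F^{M−n}. -/

import Mathlib

open Matrix

/-- A source with deviation symmetry: `S ⊆ (F^n)^s` is closed under uniform shifts. -/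
def DevSym {F : Type*} [Field F] {s n : ℕ} (S : Set (Fin s → Fin n → F)) : Prop :=
  ∀ x ∈ S, ∀ v : Fin n → F, (fun i => x i + v) ∈ S

/-- `D` is a representative set of `S`: `D ⊆ S` and every `σ ∈ S` is uniquely
`σ = (d_1 + v, …, d_s + v)` with `(d_1,…,d_s) ∈ D`, `v ∈ F^n`. -/
def RepSet {F : Type*} [Field F] {s n : ℕ} (S D : Set (Fin s → Fin n → F)) : Prop :=
  D ⊆ S ∧ ∀ σ ∈ S, ∃! dv : (Fin s → Fin n → F) × (Fin n → F),
    dv.1 ∈ D ∧ σ = fun i => dv.1 i + dv.2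

/-- The vectorized representative set `D̃ ⊆ F^{sn}` (identifying `(F^n)^s ≃ F^{sn}`). -/
def vecD {F : Type*} [Field F] {s n : ℕ} (D : Set (Fin s → Fin n → F)) :
    Set (Fin s × Fin n → F) :=
  (fun d (p : Fin s × Fin n) => d p.1 p.2) '' D

/-- The parent matrix `P = [Q_1 | ⋯ | Q_s]`. -/
def parentMatrix {F : Type*} [Field F] {s n r : ℕ}
    (Q : Fin s → Matrix (Fin r) (Fin n) F) : Matrix (Fin r) (Fin s × Fin n) F :=
  Matrix.of fun k p => Q p.1 k p.2

/-- `(H_1, …, H_s)` is a lossless linear compression of `S`: the joint encoding map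
`(x_1,…,x_s) ↦ (H_1 x_1, …, H_s x_s)` is injective on `S`. -/
def Lossless {F : Type*} [Field F] {s n : ℕ} {m : Fin s → ℕ}
    (H : ∀ i, Matrix (Fin (m i)) (Fin n) F) (S : Set (Fin s → Fin n → F)) : Prop :=
  Set.InjOn (fun x (i : Fin s) => (H i).mulVec (x i)) S

/-!
Write `Φ x = (H_i x_i)_i` for the joint encoder and `L v = (v, …, v)` for the diagonal embedding
of `F^n`. Every element of `S` is uniquely `d + L v` with `d ∈ D`, and `Φ` is injective on `S`;
hence `Φ ∘ L` is injective and `Φ` stays injective on `D` after passing to the quotient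
`F^M ⧸ range (Φ ∘ L)`, a space of dimension `M - n`. Composing with a linear isomorphism of
that quotient onto `F^{M-n}` gives a linear map `T` vanishing on constant tuples and injective
on `D`; the blocks of its matrix are the `Q_i`. Counting, `|S| = |D| |F|^n`, so perfection gives
`|D| = |F|^{M-n}` and the injection `D̃ → F^{M-n}` is a bijection.
-/

theorem Nat.le_and_eq_pow_sub_of_mul_pow_eq_pow {q a n M : ℕ} (hq : 1 < q)
    (h : a * q ^ n = q ^ M) : n ≤ M ∧ a = q ^ (M - n) := by
  have hnM : n ≤ M := (Nat.pow_dvd_pow_iff_le_right hq).mp ⟨a, by rw [← h, mul_comm]⟩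
  refine ⟨hnM, Nat.eq_of_mul_eq_mul_right (pow_pos (by omega : 0 < q) n) ?_⟩
  rw [h, ← pow_add, Nat.sub_add_cancel hnM]

theorem Set.bijOn_univ_of_injOn_of_ncard_eq {α β : Type*} [Finite β] {f : α → β} {s : Set α}
    (hf : Set.InjOn f s) (hs : s.ncard = Nat.card β) : Set.BijOn f s Set.univ := by
  refine ⟨Set.mapsTo_univ f s, hf, ?_⟩
  rw [Set.SurjOn, Set.univ_subset_iff]
  exact Set.eq_of_subset_of_ncard_le (Set.subset_univ _)
    (by rw [Set.ncard_univ, hf.ncard_image, hs])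

namespace LinearMap

variable {K E V W : Type*} [Field K] [AddCommGroup E] [Module K E] [AddCommGroup V] [Module K V]
  [AddCommGroup W] [Module K W] {Φ : V →ₗ[K] W} {L : E →ₗ[K] V} {D : Set V}

theorem injective_comp_of_injOn_add
    (hΦ : Set.InjOn (fun p : V × E => Φ (p.1 + L p.2)) (D ×ˢ Set.univ)) (hD : D.Nonempty) :
    Function.Injective (Φ ∘ₗ L) := by
  obtain ⟨d, hd⟩ := hD
  intro v v' h
  have hshift : Φ (d + L v) = Φ (d + L v') := by
    rw [map_add, map_add, ← comp_apply, ← comp_apply, h]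
  exact congrArg Prod.snd (hΦ (Set.mk_mem_prod hd trivial) (Set.mk_mem_prod hd trivial) hshift)

theorem injOn_mkQ_range_comp
    (hΦ : Set.InjOn (fun p : V × E => Φ (p.1 + L p.2)) (D ×ˢ Set.univ)) :
    Set.InjOn ((range (Φ ∘ₗ L)).mkQ ∘ₗ Φ) D := by
  intro d hd d' hd' h
  obtain ⟨v, hv⟩ : Φ d - Φ d' ∈ range (Φ ∘ₗ L) := by
    simpa only [coe_comp, Function.comp_apply, Submodule.mkQ_apply,
      Submodule.Quotient.eq] using h
  have hshift : Φ (d + L 0) = Φ (d' + L v) := by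
    rw [map_zero, add_zero, map_add, ← comp_apply, hv, add_sub_cancel]
  exact congrArg Prod.fst (hΦ (Set.mk_mem_prod hd trivial) (Set.mk_mem_prod hd' trivial) hshift)

theorem exists_comp_eq_zero_injOn [FiniteDimensional K W] {r : ℕ}
    (hr : Module.finrank K W - Module.finrank K E = r)
    (hΦ : Set.InjOn (fun p : V × E => Φ (p.1 + L p.2)) (D ×ˢ Set.univ)) (hD : D.Nonempty) :
    ∃ T : V →ₗ[K] (Fin r → K), T ∘ₗ L = 0 ∧ Set.InjOn T D := by
  set U := range (Φ ∘ₗ L)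
  have hU : Module.finrank K (W ⧸ U) = Module.finrank K (Fin r → K) := by
    have := U.finrank_quotient_add_finrank
    rw [finrank_range_of_inj (injective_comp_of_injOn_add hΦ hD)] at this
    rw [Module.finrank_fin_fun]
    omega
  let e := LinearEquiv.ofFinrankEq _ _ hU
  refine ⟨e.toLinearMap ∘ₗ U.mkQ ∘ₗ Φ, ?_,
    e.injective.comp_injOn (injOn_mkQ_range_comp hΦ)⟩
  ext v : 1
  simp only [coe_comp, Function.comp_apply, LinearEquiv.coe_coe, zero_apply,
    LinearEquiv.map_eq_zero_iff, Submodule.mkQ_apply, Submodule.Quotient.mk_eq_zero]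
  exact ⟨v, rfl⟩

end LinearMap

section Blocks

variable {F : Type*} [Field F] {s n r : ℕ}

theorem parentMatrix_mulVec (Q : Fin s → Matrix (Fin r) (Fin n) F) (x : Fin s → Fin n → F) :
    parentMatrix Q *ᵥ (fun p => x p.1 p.2) = ∑ i, Q i *ᵥ x i := by
  ext k
  simp only [mulVec, dotProduct, parentMatrix, of_apply, Finset.sum_apply,
    Fintype.sum_prod_type]

def blockMatrices (T : (Fin s → Fin n → F) →ₗ[F] (Fin r → F)) (i : Fin s) :
    Matrix (Fin r) (Fin n) F :=
  LinearMap.toMatrix' (T ∘ₗ LinearMap.single F (fun _ => Fin n → F) i)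

theorem blockMatrices_mulVec (T : (Fin s → Fin n → F) →ₗ[F] (Fin r → F)) (i : Fin s)
    (v : Fin n → F) : blockMatrices T i *ᵥ v = T (Pi.single i v) := by
  rw [blockMatrices, ← toLin'_apply, toLin'_toMatrix']
  rfl

theorem parentMatrix_blockMatrices_mulVec (T : (Fin s → Fin n → F) →ₗ[F] (Fin r → F))
    (x : Fin s → Fin n → F) :
    parentMatrix (blockMatrices T) *ᵥ (fun p => x p.1 p.2) = T x := by
  simp only [parentMatrix_mulVec, blockMatrices_mulVec, ← map_sum, Finset.univ_sum_single]

theorem sum_blockMatrices_eq_zero {T : (Fin s → Fin n → F) →ₗ[F] (Fin r → F)}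
    (hT : ∀ v, T (fun _ => v) = 0) : ∑ i, blockMatrices T i = 0 := by
  refine mulVec_injective (funext fun v => ?_)
  rw [sum_mulVec, zero_mulVec]
  simp only [blockMatrices_mulVec, ← map_sum, Finset.univ_sum_single (fun _ : Fin s => v), hT]

end Blocks

section Source

variable {F : Type*} [Field F] {s n : ℕ} {S D : Set (Fin s → Fin n → F)}

theorem RepSet.shift_injOn (hSym : DevSym S) (hRep : RepSet S D) :
    Set.InjOn (fun p : (Fin s → Fin n → F) × (Fin n → F) => fun i => p.1 i + p.2)
      (D ×ˢ Set.univ) := by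
  rintro ⟨d, v⟩ ⟨hd, -⟩ ⟨d', v'⟩ ⟨hd', -⟩ h
  exact (hRep.2 _ (hSym d (hRep.1 hd) v)).unique ⟨hd, rfl⟩ ⟨hd', h⟩

theorem RepSet.card_eq [Fintype F] (hSym : DevSym S) (hRep : RepSet S D) :
    Nat.card S = Nat.card D * Fintype.card F ^ n := by
  let shift : D × (Fin n → F) → S := fun p =>
    ⟨fun i => p.1.1 i + p.2, hSym _ (hRep.1 p.1.2) p.2⟩
  have hshift : Function.Bijective shift := by
    refine ⟨fun p p' h => ?_, fun ⟨σ, hσ⟩ => ?_⟩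
    · have hpp' := hRep.shift_injOn hSym (Set.mk_mem_prod p.1.2 trivial)
        (Set.mk_mem_prod p'.1.2 trivial) (congrArg Subtype.val h)
      obtain ⟨hd, hv⟩ := Prod.ext_iff.mp hpp'
      exact Prod.ext (Subtype.ext hd) hv
    · obtain ⟨⟨d, v⟩, ⟨hd, rfl⟩, -⟩ := hRep.2 σ hσ
      exact ⟨(⟨d, hd⟩, v), rfl⟩
  rw [← Nat.card_eq_of_bijective shift hshift, Nat.card_prod, Nat.card_fun, Nat.card_fin,
    Nat.card_eq_fintype_card (α := F)]

end Source

theorem stmt_9_general {F : Type*} [Field F] [Fintype F] {s n : ℕ}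
    (S D : Set (Fin s → Fin n → F)) (hSym : DevSym S) (hRep : RepSet S D)
    {m : Fin s → ℕ} (H : ∀ i, Matrix (Fin (m i)) (Fin n) F)
    (hLoss : Lossless H S)
    (hPerfect : Fintype.card F ^ (∑ i, m i) = Nat.card S) :
    n ≤ ∑ i, m i ∧
    ∃ Q : Fin s → Matrix (Fin (∑ i, m i - n)) (Fin n) F,
      (∑ i, Q i = 0) ∧
      Set.BijOn (parentMatrix Q).mulVec (vecD D) Set.univ := by
  obtain ⟨hnM, hD⟩ := Nat.le_and_eq_pow_sub_of_mul_pow_eq_pow Fintype.one_lt_card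
    ((hRep.card_eq hSym).symm.trans hPerfect.symm)
  have hDne : D.Nonempty := Set.nonempty_of_ncard_ne_zero (by
    rw [← Nat.card_coe_set_eq, hD]; exact (pow_pos Fintype.card_pos _).ne')
  let Φ : (Fin s → Fin n → F) →ₗ[F] (∀ i, Fin (m i) → F) :=
    LinearMap.pi fun i => (H i).mulVecLin ∘ₗ LinearMap.proj i
  let L : (Fin n → F) →ₗ[F] (Fin s → Fin n → F) := LinearMap.pi fun _ => LinearMap.id
  have hΦ : Set.InjOn (fun p => Φ (p.1 + L p.2)) (D ×ˢ Set.univ) := fun p hp p' hp' h =>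
    hRep.shift_injOn hSym hp hp' (hLoss (hSym _ (hRep.1 hp.1) p.2) (hSym _ (hRep.1 hp'.1) p'.2) h)
  obtain ⟨T, hTL, hT⟩ := LinearMap.exists_comp_eq_zero_injOn (r := ∑ i, m i - n)
    (by simp [Module.finrank_pi_fintype]) hΦ hDne
  refine ⟨hnM, blockMatrices T, sum_blockMatrices_eq_zero (LinearMap.congr_fun hTL), ?_⟩
  refine Set.bijOn_univ_of_injOn_of_ncard_eq ?_ ?_
  · rintro _ ⟨d, hd, rfl⟩ _ ⟨d', hd', rfl⟩ h
    simp only [parentMatrix_blockMatrices_mulVec] at h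
    rw [hT hd hd' h]
  · rw [vecD, Set.ncard_image_of_injective _ fun d d' h => funext₂ fun i j => congrFun h (i, j),
      ← Nat.card_coe_set_eq, hD, Nat.card_fun, Nat.card_fin, Nat.card_eq_fintype_card]

/-- Necessary condition for perfect compression, Theorem 6: a perfect
lossless linear compression (`|F|^M = |S|`) forces `M ≥ n` and the existence of an
`(M-n) × sn` matrix `P = [Q_1 | ⋯ | Q_s]` with `Q_1 + ⋯ + Q_s = 0` that restricts to a
bijection from `D̃` onto `F^{M-n}`. -/
theorem stmt_9 {F : Type*} [Field F] [Fintype F] {s n : ℕ} (hs : 2 ≤ s) (hn : 1 ≤ n)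
    (S D : Set (Fin s → Fin n → F)) (hSym : DevSym S) (hRep : RepSet S D)
    {m : Fin s → ℕ} (H : ∀ i, Matrix (Fin (m i)) (Fin n) F)
    (hLoss : Lossless H S)
    (hPerfect : Fintype.card F ^ (∑ i, m i) = Nat.card S) :
    n ≤ ∑ i, m i ∧
    ∃ Q : Fin s → Matrix (Fin (∑ i, m i - n)) (Fin n) F,
      (∑ i, Q i = 0) ∧
      Set.BijOn (parentMatrix Q).mulVec (vecD D) Set.univ :=
  stmt_9_general S D hSym hRep H hLoss hPerfect
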